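/- arXiv:1703.00329 — 4 statements merged into one kernel-verified Lean document; each statement's English description precedes it below -/
import Mathlib

section
/- Let S be a real random variable such that max(P(S > u), P(−S > u)) ≤ e^{−u²/(2v)} for all u ≥ 0, where v > 0. For θ > 0 set λ = θ√v. Then E[e^{−θ|S|}] ≥ 1 − 2√(2π) λ e^{λ²/2} (1 − Φ(λ)), where Φ(λ) = P(G ≤ λ) is the cumulative distribution function of a standard Gaussian random variable G. -/
/-!
Since `1 - e^{-θx} = ∫₀ˣ θ e^{-θt} dt`, the layer-cake formula gives
`1 - E[e^{-θ|S|}] = ∫₀^∞ θ e^{-θt} P(|S| > t) dt`, and the sub-Gaussian tails bound this by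
`2θ ∫₀^∞ e^{-t²/(2v) - θt} dt`.
Completing the square, `t²/(2v) + θt = (t + θv)²/(2v) - λ²/2`, and the substitution
`t + θv = √v s` turns the last integral into `√v e^{λ²/2} ∫_λ^∞ e^{-s²/2} ds
= √(2πv) e^{λ²/2} (1 - Φ(λ))`.
-/

open MeasureTheory ProbabilityTheory
open scoped ENNReal Real

open Real Set

theorem integral_comp_add_right_Ioi {E : Type*} [NormedAddCommGroup E] [NormedSpace ℝ E]
    (g : ℝ → E) (a d : ℝ) :
    ∫ x in Ioi a, g (x + d) = ∫ x in Ioi (a + d), g x := by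
  simpa using (measurePreserving_add_right volume d).setIntegral_preimage_emb
    (measurableEmbedding_addRight d) g (Ioi (a + d))

theorem integral_Ioi_exp_neg_sq_div_two (l : ℝ) :
    ∫ s in Ioi l, exp (-s ^ 2 / 2) = √(2 * π) * (1 - (gaussianReal 0 1 (Iic l)).toReal) := by
  have hpdf : ∀ s, exp (-s ^ 2 / 2) = √(2 * π) * gaussianPDFReal 0 1 s := fun s => by
    simp only [gaussianPDFReal, NNReal.coe_one, mul_one, sub_zero, ← mul_assoc,
      mul_inv_cancel₀ (show √(2 * π) ≠ 0 by positivity), one_mul]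
  have htail : (gaussianReal 0 1 (Ioi l)).toReal = ∫ s in Ioi l, gaussianPDFReal 0 1 s := by
    rw [gaussianReal_apply_eq_integral 0 one_ne_zero, ENNReal.toReal_ofReal]
    exact setIntegral_nonneg measurableSet_Ioi fun s _ => gaussianPDFReal_nonneg 0 1 s
  rw [← compl_Iic, prob_compl_eq_one_sub measurableSet_Iic,
    ENNReal.toReal_sub_of_le prob_le_one ENNReal.one_ne_top, ENNReal.toReal_one, compl_Iic] at htail
  simp_rw [hpdf, integral_const_mul, htail]

theorem integral_Ioi_exp_neg_mul_sq_eq_sqrt_mul {v : ℝ} (hv : 0 < v) (a : ℝ) :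
    ∫ t in Ioi a, exp (-(2 * v)⁻¹ * t ^ 2) =
      √v * ∫ s in Ioi (a / √v), exp (-s ^ 2 / 2) := by
  have hsv : 0 < √v := sqrt_pos.mpr hv
  have h := integral_comp_mul_left_Ioi (fun t => exp (-(2 * v)⁻¹ * t ^ 2)) (a / √v) hsv
  have harg : ∀ s, exp (-(2 * v)⁻¹ * (√v * s) ^ 2) = exp (-s ^ 2 / 2) := fun s => by
    rw [mul_pow, sq_sqrt hv.le]
    field_simp
  simp only [harg, mul_div_cancel₀ a hsv.ne', smul_eq_mul] at h
  rw [h, mul_inv_cancel_left₀ hsv.ne']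

theorem exp_neg_sq_div_mul_exp_neg_mul {v : ℝ} (hv : 0 < v) (θ t : ℝ) :
    exp (-t ^ 2 / (2 * v)) * exp (-θ * t) =
      exp ((θ * √v) ^ 2 / 2) * exp (-(2 * v)⁻¹ * (t + θ * v) ^ 2) := by
  rw [← exp_add, ← exp_add, mul_pow, sq_sqrt hv.le]
  congr 1
  field_simp
  ring

theorem integrable_exp_neg_sq_div_mul_exp_neg_mul {v : ℝ} (hv : 0 < v) (θ : ℝ) :
    Integrable (fun t => exp (-t ^ 2 / (2 * v)) * exp (-θ * t)) := by
  simp_rw [exp_neg_sq_div_mul_exp_neg_mul hv]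
  exact ((integrable_exp_neg_mul_sq (by positivity)).comp_add_right (θ * v)).const_mul _

theorem integral_Ioi_zero_exp_neg_sq_div_mul_exp_neg_mul {v : ℝ} (hv : 0 < v) (θ : ℝ) :
    ∫ t in Ioi 0, exp (-t ^ 2 / (2 * v)) * exp (-θ * t) =
      √v * √(2 * π) * exp ((θ * √v) ^ 2 / 2) *
        (1 - (gaussianReal 0 1 (Iic (θ * √v))).toReal) := by
  have hshift : θ * v / √v = θ * √v := by
    rw [mul_div_assoc, div_sqrt]
  simp_rw [exp_neg_sq_div_mul_exp_neg_mul hv]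
  rw [integral_const_mul, integral_comp_add_right_Ioi (fun t => exp (-(2 * v)⁻¹ * t ^ 2)),
    zero_add, integral_Ioi_exp_neg_mul_sq_eq_sqrt_mul hv, hshift, integral_Ioi_exp_neg_sq_div_two]
  ring

theorem integral_mul_exp_neg_mul (θ a : ℝ) :
    ∫ t in (0 : ℝ)..a, θ * exp (-θ * t) = 1 - exp (-θ * a) := by
  have h := intervalIntegral.smul_integral_comp_mul_left (a := 0) (b := a) (f := exp) (-θ)
  rw [smul_eq_mul, mul_zero, integral_exp, exp_zero] at h
  rw [intervalIntegral.integral_const_mul]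
  linarith

section LayerCake

variable {α : Type*} [MeasurableSpace α] (μ : Measure α) {X : α → ℝ} {θ : ℝ}

theorem measure_lt_abs_le_add (S : α → ℝ) (t : ℝ) :
    μ {ω | t < |S ω|} ≤ μ {ω | S ω > t} + μ {ω | -S ω > t} :=
  (measure_mono (show {ω | t < |S ω|} ⊆ {ω | S ω > t} ∪ {ω | -S ω > t} from
    fun ω (h : t < |S ω|) => lt_abs.mp h)).trans (measure_union_le _ _)

theorem lintegral_ofReal_one_sub_exp_neg_mul (hX0 : 0 ≤ᵐ[μ] X) (hX : AEMeasurable X μ)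
    (hθ : 0 ≤ θ) :
    ∫⁻ ω, ENNReal.ofReal (1 - exp (-θ * X ω)) ∂μ =
      ∫⁻ t in Ioi 0, μ {ω | t < X ω} * ENNReal.ofReal (θ * exp (-θ * t)) := by
  simp_rw [← integral_mul_exp_neg_mul]
  exact lintegral_comp_eq_lintegral_meas_lt_mul μ hX0 hX
    (fun _ _ => (by fun_prop : Continuous fun t => θ * exp (-θ * t)).intervalIntegrable _ _)
    (ae_of_all _ fun _ => by positivity)

theorem one_sub_integral_exp_neg_mul_le [IsProbabilityMeasure μ] (hX0 : 0 ≤ᵐ[μ] X)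
    (hX : AEMeasurable X μ) (hθ : 0 ≤ θ) {G : ℝ → ℝ} (hG0 : ∀ t, 0 ≤ G t)
    (hG : IntegrableOn (fun t => G t * (θ * exp (-θ * t))) (Ioi 0))
    (htail : ∀ t > 0, μ {ω | t < X ω} ≤ ENNReal.ofReal (G t)) :
    1 - ∫ ω, exp (-θ * X ω) ∂μ ≤ ∫ t in Ioi 0, G t * (θ * exp (-θ * t)) := by
  have hmeas : AEMeasurable (fun ω => exp (-θ * X ω)) μ := by fun_prop
  have hle_one : ∀ᵐ ω ∂μ, exp (-θ * X ω) ≤ 1 :=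
    hX0.mono fun ω hω =>
      exp_le_one_iff.mpr (mul_nonpos_of_nonpos_of_nonneg (neg_nonpos.mpr hθ) hω)
  have hint : Integrable (fun ω => exp (-θ * X ω)) μ :=
    (integrable_const 1).mono' hmeas.aestronglyMeasurable <|
      hle_one.mono fun ω hω => by rwa [norm_of_nonneg (exp_pos _).le]
  have hweight_nonneg : ∀ t, 0 ≤ G t * (θ * exp (-θ * t)) := fun t => by
    have := hG0 t
    positivity
  calc 1 - ∫ ω, exp (-θ * X ω) ∂μ = ∫ ω, (1 - exp (-θ * X ω)) ∂μ := by
        rw [integral_sub (integrable_const 1) hint, integral_const, probReal_univ, one_smul]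
    _ = (∫⁻ ω, ENNReal.ofReal (1 - exp (-θ * X ω)) ∂μ).toReal :=
        integral_eq_lintegral_of_nonneg_ae (hle_one.mono fun _ h => sub_nonneg.mpr h)
          (aemeasurable_const.sub hmeas).aestronglyMeasurable
    _ ≤ (ENNReal.ofReal (∫ t in Ioi 0, G t * (θ * exp (-θ * t)))).toReal := by
        refine ENNReal.toReal_mono ENNReal.ofReal_ne_top ?_
        rw [lintegral_ofReal_one_sub_exp_neg_mul μ hX0 hX hθ,
          ofReal_integral_eq_lintegral_ofReal hG (ae_of_all _ hweight_nonneg)]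
        refine setLIntegral_mono' measurableSet_Ioi fun t ht => ?_
        rw [ENNReal.ofReal_mul (hG0 t)]
        exact mul_le_mul_left (htail t ht) _
    _ = ∫ t in Ioi 0, G t * (θ * exp (-θ * t)) :=
        ENNReal.toReal_ofReal (setIntegral_nonneg measurableSet_Ioi fun t _ => hweight_nonneg t)

end LayerCake

/-- If `S` is sub-Gaussian with variance factor `v`, i.e.
`max (P(S > u), P(-S > u)) ≤ e^{-u²/(2v)}` for all `u ≥ 0`, then for `θ > 0` and
`λ = θ √v`, `E[e^{-θ |S|}] ≥ 1 - 2 √(2π) λ e^{λ²/2} (1 - Φ(λ))`, where `Φ` is the standard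
Gaussian cumulative distribution function. -/
theorem mgf_abs_subGaussian_lower
    {Ω : Type*} [MeasurableSpace Ω] (μ : Measure Ω) [IsProbabilityMeasure μ]
    (S : Ω → ℝ) (hS : Measurable S) (v θ : ℝ) (hv : 0 < v) (hθ : 0 < θ)
    (hsub : ∀ u : ℝ, 0 ≤ u →
      μ {ω | S ω > u} ≤ ENNReal.ofReal (Real.exp (-u ^ 2 / (2 * v))) ∧
      μ {ω | -S ω > u} ≤ ENNReal.ofReal (Real.exp (-u ^ 2 / (2 * v)))) :
    1 - 2 * Real.sqrt (2 * π) * (θ * Real.sqrt v) *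
        Real.exp ((θ * Real.sqrt v) ^ 2 / 2) *
        (1 - (gaussianReal 0 1 (Set.Iic (θ * Real.sqrt v))).toReal) ≤
      ∫ ω, Real.exp (-θ * |S ω|) ∂μ := by
  have htail : ∀ t > 0, μ {ω | t < |S ω|} ≤ ENNReal.ofReal (2 * exp (-t ^ 2 / (2 * v))) :=
    fun t ht => calc
      _ ≤ _ := measure_lt_abs_le_add μ S t
      _ ≤ _ := add_le_add (hsub t ht.le).1 (hsub t ht.le).2
      _ = _ := by rw [← ENNReal.ofReal_add (by positivity) (by positivity), ← two_mul]
  have hweight : ∀ t, 2 * exp (-t ^ 2 / (2 * v)) * (θ * exp (-θ * t)) =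
      2 * θ * (exp (-t ^ 2 / (2 * v)) * exp (-θ * t)) := fun t => mul_mul_mul_comm _ _ _ _
  have h := one_sub_integral_exp_neg_mul_le μ (ae_of_all _ fun ω => abs_nonneg (S ω))
    hS.abs.aemeasurable hθ.le (fun t => by positivity)
    (by
      simp_rw [hweight]
      exact ((integrable_exp_neg_sq_div_mul_exp_neg_mul hv θ).const_mul _).integrableOn)
    htail
  simp_rw [hweight, integral_const_mul, integral_Ioi_zero_exp_neg_sq_div_mul_exp_neg_mul hv] at h
  linear_combination h
end

section
/- Let m* = max_{x,y∈E} ( H_{x,y} − max(J(x), J(y)) ) and m*_HS = max_{x,y∈E} ( H_{x,y} − J(x) − J(y) + min_{u∈E} J(u) ). Then m* = m*_HS. -/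
open scoped BigOperators

/-- A path from `x` to `y` for the neighbourhood relation `S` is a finite sequence
`f 0 = x, …, f n = y` with consecutive elements neighbours. -/
def IsPath {E : Type*} (S : E → E → Prop) (x y : E) (n : ℕ) (f : ℕ → E) : Prop :=
  f 0 = x ∧ f n = y ∧ ∀ i < n, S (f i) (f (i + 1))

/-- `elevation S J x y = H_{x,y}`, the minimum over paths `p` from `x` to `y` of
`max_{z ∈ p} J z`. -/
noncomputable def elevation {E : Type*} (S : E → E → Prop) (J : E → ℝ) (x y : E) : ℝ :=
  sInf {h : ℝ | ∃ (n : ℕ) (f : ℕ → E), IsPath S x y n f ∧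
    h = (Finset.range (n + 1)).sup' Finset.nonempty_range_add_one (fun i => J (f i))}

/-- `m* = max_{x,y} (H_{x,y} - max (J x) (J y))`. -/
noncomputable def mstar {E : Type*} [Fintype E] [Nonempty E]
    (S : E → E → Prop) (J : E → ℝ) : ℝ :=
  Finset.univ.sup' Finset.univ_nonempty fun x =>
    Finset.univ.sup' Finset.univ_nonempty fun y =>
      elevation S J x y - max (J x) (J y)

/-- `m*_HS = max_{x,y} (H_{x,y} - J x - J y + min J)`, the constant of Holley and Strook. -/
noncomputable def mstarHS {E : Type*} [Fintype E] [Nonempty E]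
    (S : E → E → Prop) (J : E → ℝ) : ℝ :=
  Finset.univ.sup' Finset.univ_nonempty fun x =>
    Finset.univ.sup' Finset.univ_nonempty fun y =>
      elevation S J x y - J x - J y + Finset.univ.inf' Finset.univ_nonempty J

/-! The elevation is an ultrametric: concatenating a path from `x` to `u` with one from `u` to
`y` gives `H_{x,y} ≤ max H_{x,u} H_{u,y}`. Taking for `u` a global minimiser of `J`, so that
`J u = min J`, this bounds each term of `m*` by a term of `m*_HS`. Conversely each term of `m*_HS`
is at most the corresponding term of `m*`, because `J x + J y - min J ≥ max (J x) (J y)`. -/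

section Elevation

variable {E : Type*}

def pathSup (J : E → ℝ) (n : ℕ) (f : ℕ → E) : ℝ :=
  (Finset.range (n + 1)).sup' Finset.nonempty_range_add_one fun i => J (f i)

def pathAppend (n : ℕ) (f g : ℕ → E) : ℕ → E :=
  fun i => if i ≤ n then f i else g (i - n)

variable {S : E → E → Prop} {J : E → ℝ}

lemma pathAppend_of_le {n i : ℕ} (f g : ℕ → E) (hi : i ≤ n) : pathAppend n f g i = f i :=
  if_pos hi

lemma pathAppend_of_ge {n i : ℕ} {f g : ℕ → E} (hfg : f n = g 0) (hi : n ≤ i) :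
    pathAppend n f g i = g (i - n) := by
  rcases hi.eq_or_lt with rfl | hlt
  · simp [pathAppend, hfg]
  · exact if_neg hlt.not_ge

lemma IsPath.append {x u y : E} {n m : ℕ} {f g : ℕ → E} (hf : IsPath S x u n f)
    (hg : IsPath S u y m g) : IsPath S x y (n + m) (pathAppend n f g) := by
  obtain ⟨hf0, hfn, hfS⟩ := hf
  obtain ⟨hg0, hgm, hgS⟩ := hg
  have hjoin : f n = g 0 := hfn.trans hg0.symm
  refine ⟨by rw [pathAppend_of_le f g n.zero_le, hf0], ?_, fun i hi => ?_⟩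
  · rw [pathAppend_of_ge hjoin (Nat.le_add_right n m), Nat.add_sub_cancel_left, hgm]
  · rcases lt_or_ge i n with hin | hin
    · rw [pathAppend_of_le f g hin.le, pathAppend_of_le f g hin]
      exact hfS i hin
    · rw [pathAppend_of_ge hjoin hin, pathAppend_of_ge hjoin (hin.trans i.le_succ),
        Nat.succ_sub hin]
      exact hgS (i - n) (by omega)

lemma pathSup_pathAppend_le {n m : ℕ} {f g : ℕ → E} (hfg : f n = g 0) :
    pathSup J (n + m) (pathAppend n f g) ≤ max (pathSup J n f) (pathSup J m g) := by
  refine Finset.sup'_le _ _ fun i hi => ?_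
  rw [Finset.mem_range] at hi
  rcases le_or_gt i n with hin | hin
  · rw [pathAppend_of_le f g hin]
    exact le_max_of_le_left (Finset.le_sup' (fun i => J (f i)) (Finset.mem_range.2 (by omega)))
  · rw [pathAppend_of_ge hfg hin.le]
    exact le_max_of_le_right (Finset.le_sup' (fun i => J (g i)) (Finset.mem_range.2 (by omega)))

lemma elevation_le_pathSup {x y : E} {n : ℕ} {f : ℕ → E} (hf : IsPath S x y n f) :
    elevation S J x y ≤ pathSup J n f := by
  refine csInf_le ⟨J x, ?_⟩ ⟨n, f, hf, rfl⟩
  rintro _ ⟨k, g, ⟨hg0, -, -⟩, rfl⟩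
  rw [← hg0]
  exact Finset.le_sup' (fun i => J (g i)) (Finset.mem_range.2 k.succ_pos)

lemma exists_pathSup_lt_of_elevation_lt {x y : E}
    (hxy : ∃ (n : ℕ) (f : ℕ → E), IsPath S x y n f) {c : ℝ} (hc : elevation S J x y < c) :
    ∃ (n : ℕ) (f : ℕ → E), IsPath S x y n f ∧ pathSup J n f < c := by
  obtain ⟨n, f, hf⟩ := hxy
  obtain ⟨_, ⟨k, g, hg, rfl⟩, hlt⟩ :=
    exists_lt_of_csInf_lt (by exact ⟨_, n, f, hf, rfl⟩) hc
  exact ⟨k, g, hg, hlt⟩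

lemma elevation_le_max {x u y : E} (hxu : ∃ (n : ℕ) (f : ℕ → E), IsPath S x u n f)
    (huy : ∃ (n : ℕ) (f : ℕ → E), IsPath S u y n f) :
    elevation S J x y ≤ max (elevation S J x u) (elevation S J u y) := by
  refine le_of_forall_gt_imp_ge_of_dense fun c hc => ?_
  obtain ⟨n, f, hf, hfc⟩ := exists_pathSup_lt_of_elevation_lt hxu (max_lt_iff.1 hc).1
  obtain ⟨m, g, hg, hgc⟩ := exists_pathSup_lt_of_elevation_lt huy (max_lt_iff.1 hc).2
  calc elevation S J x y ≤ pathSup J (n + m) (pathAppend n f g) :=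
        elevation_le_pathSup (hf.append hg)
    _ ≤ max (pathSup J n f) (pathSup J m g) := pathSup_pathAppend_le (hf.2.1.trans hg.1.symm)
    _ ≤ c := max_le hfc.le hgc.le

end Elevation

section CriticalDepth

variable {E : Type*} [Fintype E] [Nonempty E] (S : E → E → Prop) (J : E → ℝ)

lemma mstar_le_iff {c : ℝ} :
    mstar S J ≤ c ↔ ∀ x y, elevation S J x y - max (J x) (J y) ≤ c := by
  simp [mstar, Finset.sup'_le_iff]

lemma mstarHS_le_iff {c : ℝ} :
    mstarHS S J ≤ c ↔
      ∀ x y, elevation S J x y - J x - J y + Finset.univ.inf' Finset.univ_nonempty J ≤ c := by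
  simp [mstarHS, Finset.sup'_le_iff]

lemma le_mstar (x y : E) : elevation S J x y - max (J x) (J y) ≤ mstar S J :=
  Finset.le_sup'_of_le _ (Finset.mem_univ x) <|
    Finset.le_sup' (fun y => elevation S J x y - max (J x) (J y)) (Finset.mem_univ y)

lemma le_mstarHS (x y : E) :
    elevation S J x y - J x - J y + Finset.univ.inf' Finset.univ_nonempty J ≤ mstarHS S J :=
  Finset.le_sup'_of_le _ (Finset.mem_univ x) <|
    Finset.le_sup' (fun y => elevation S J x y - J x - J y + Finset.univ.inf' _ J)
      (Finset.mem_univ y)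

end CriticalDepth

theorem mstar_eq_mstarHS_general
    {E : Type*} [Fintype E] [Nonempty E] (S : E → E → Prop)
    (hconn : ∀ a b : E, ∃ (n : ℕ) (f : ℕ → E), IsPath S a b n f)
    (J : E → ℝ) :
    mstar S J = mstarHS S J := by
  obtain ⟨u, -, hu⟩ := Finset.exists_mem_eq_inf' Finset.univ_nonempty J
  set m := Finset.univ.inf' Finset.univ_nonempty J
  have hm : ∀ x, m ≤ J x := fun x => Finset.inf'_le J (Finset.mem_univ x)
  refine le_antisymm ((mstar_le_iff S J).2 fun x y => ?_) ((mstarHS_le_iff S J).2 fun x y => ?_)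
  · rcases le_max_iff.1 (elevation_le_max (J := J) (hconn x u) (hconn u y)) with h | h
    · linarith [le_mstarHS S J x u, le_max_left (J x) (J y)]
    · linarith [le_mstarHS S J u y, le_max_right (J x) (J y)]
  · have hmax : max (J x) (J y) ≤ J x + J y - m :=
      max_le (by linarith [hm y]) (by linarith [hm x])
    linarith [le_mstar S J x y]

/-- The two definitions of the critical depth coincide: `m* = m*_HS`. -/
theorem mstar_eq_mstarHS
    {E : Type*} [Fintype E] [Nonempty E] (S : E → E → Prop)
    (hsym : ∀ a b, S a b → S b a)
    (hconn : ∀ a b : E, ∃ (n : ℕ) (f : ℕ → E), IsPath S a b n f)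
    (J : E → ℝ) :
    mstar S J = mstarHS S J :=
  mstar_eq_mstarHS_general S hconn J
end

section
/- Let 0 < δ1 < δ2 < 1, A > 0, B > 0, d > 0 and u0 ≥ 0. Define A_t = A d (1+td)^{−δ1}, and let B_t be a nonnegative locally integrable function with B_t ≤ B d (1+td)^{−δ2} for all t ≥ 0. Then there exist Γ > 0 and T0 ≥ 0 such that for all t ≥ T0, u0 · exp(∫_0^t (−A_s + B_s) ds) + ∫_0^t B_s · exp(∫_s^t (−A_h + B_h) dh) ds ≤ Γ (1+t)^{δ1 − δ2}. -/
open MeasureTheory intervalIntegral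

/-!
Replacing `B_t` by its majorant `b t = B₀ d (1 + t d)^(-δ₂)` only increases the quantity and
makes the rate `r = -A_t + b t` continuous. For `t` beyond some `s₀`, `K (1 + t d)^(δ₁ - δ₂)` is
then a supersolution of `u' = r u + b`: measured against the damping `A_t ≍ (1 + t d)^(-δ₁)`,
the perturbation `b t ≍ (1 + t d)^(δ₁ - δ₂) A_t` and the logarithmic derivative
`≍ (1 + t d)^(δ₁ - 1) A_t` of the weight are both small, because `δ₁ < δ₂ < 1`. Restarting the
equation at `s₀` and comparing with this supersolution gives the bound.
-/

open Set Filter Topology Real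

/-- The solution at time `t` of `u' = r u + b`, `u t₀ = u₀`. -/
noncomputable def duhamel (r b : ℝ → ℝ) (u₀ t₀ t : ℝ) : ℝ :=
  u₀ * exp (∫ s in t₀..t, r s) + ∫ s in t₀..t, b s * exp (∫ h in s..t, r h)

section Duhamel

variable {r b : ℝ → ℝ} {u₀ t₀ t : ℝ}

theorem IntervalIntegrable.mul_exp_integral (hb : IntervalIntegrable b volume t₀ t)
    (hr : IntervalIntegrable r volume t₀ t) :
    IntervalIntegrable (fun s => b s * exp (∫ h in s..t, r h)) volume t₀ t :=
  hb.mul_continuousOn <| continuous_exp.comp_continuousOn <|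
    continuousOn_primitive_interval_left ((intervalIntegrable_iff').1 hr)

theorem duhamel_flow {t₁ : ℝ} (hr₀ : IntervalIntegrable r volume t₀ t₁)
    (hr₁ : IntervalIntegrable r volume t₁ t) (hb₀ : IntervalIntegrable b volume t₀ t₁)
    (hb₁ : IntervalIntegrable b volume t₁ t) :
    duhamel r b (duhamel r b u₀ t₀ t₁) t₁ t = duhamel r b u₀ t₀ t := by
  have hsplit : EqOn (fun s => b s * exp (∫ h in s..t, r h))
      (fun s => b s * exp (∫ h in s..t₁, r h) * exp (∫ h in t₁..t, r h)) (uIcc t₀ t₁) :=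
    fun s hs => by
      simp only [mul_assoc, ← exp_add,
        integral_add_adjacent_intervals (hr₀.mono_set (uIcc_subset_uIcc_right hs)) hr₁]
  have hint₀ : IntervalIntegrable (fun s => b s * exp (∫ h in s..t, r h)) volume t₀ t₁ :=
    ((hb₀.mul_exp_integral hr₀).mul_const _).congr fun s hs => (hsplit (uIoc_subset_uIcc hs)).symm
  rw [duhamel, duhamel, duhamel,
    ← integral_add_adjacent_intervals hint₀ (hb₁.mul_exp_integral hr₁), integral_congr hsplit,
    intervalIntegral.integral_mul_const, ← integral_add_adjacent_intervals hr₀ hr₁, exp_add]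
  ring

theorem duhamel_mono {r' b' : ℝ → ℝ} (ht : t₀ ≤ t) (hu₀ : 0 ≤ u₀)
    (hr : IntervalIntegrable r volume t₀ t) (hr' : IntervalIntegrable r' volume t₀ t)
    (hb : IntervalIntegrable b volume t₀ t) (hb' : IntervalIntegrable b' volume t₀ t)
    (hrr' : ∀ s ∈ Icc t₀ t, r s ≤ r' s) (hb₀ : ∀ s ∈ Icc t₀ t, 0 ≤ b s)
    (hbb' : ∀ s ∈ Icc t₀ t, b s ≤ b' s) :
    duhamel r b u₀ t₀ t ≤ duhamel r' b' u₀ t₀ t := by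
  have hexp : ∀ s ∈ Icc t₀ t, exp (∫ h in s..t, r h) ≤ exp (∫ h in s..t, r' h) := by
    intro s hs
    have hsub := uIcc_subset_uIcc_right (Icc_subset_uIcc hs)
    exact exp_le_exp.2 <| integral_mono_on hs.2 (hr.mono_set hsub) (hr'.mono_set hsub)
      fun x hx => hrr' x ⟨hs.1.trans hx.1, hx.2⟩
  refine add_le_add (mul_le_mul_of_nonneg_left (hexp t₀ (left_mem_Icc.2 ht)) hu₀) ?_
  refine integral_mono_on ht (hb.mul_exp_integral hr) (hb'.mul_exp_integral hr') fun s hs => ?_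
  exact mul_le_mul (hbb' s hs) (hexp s hs) (exp_pos _).le ((hb₀ s hs).trans (hbb' s hs))

theorem duhamel_le_of_supersolution {V V' : ℝ → ℝ} (ht : t₀ ≤ t)
    (hr : ContinuousOn r (Icc t₀ t)) (hb : IntervalIntegrable b volume t₀ t)
    (hV : ContinuousOn V (Icc t₀ t)) (hV' : ∀ x ∈ Ioo t₀ t, HasDerivAt V (V' x) x)
    (hsuper : ∀ x ∈ Ioo t₀ t, r x * V x + b x ≤ V' x) (hu₀ : u₀ ≤ V t₀) :
    duhamel r b u₀ t₀ t ≤ V t := by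
  set E : ℝ → ℝ := fun s => exp (∫ h in s..t, r h)
  have hrint : IntervalIntegrable r volume t₀ t := hr.intervalIntegrable_of_Icc ht
  have hE : ContinuousOn E (Icc t₀ t) := by
    have := continuousOn_primitive_interval_left ((intervalIntegrable_iff').1 hrint)
    rw [uIcc_of_le ht] at this
    exact continuous_exp.comp_continuousOn this
  have hE' : ∀ x ∈ Ioo t₀ t, HasDerivAt E (E x * -r x) x := fun x hx =>
    (integral_hasDerivAt_left
      (hrint.mono_set (uIcc_subset_uIcc_right (Icc_subset_uIcc (Ioo_subset_Icc_self hx))))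
      ((hr.mono Ioo_subset_Icc_self).stronglyMeasurableAtFilter isOpen_Ioo x hx)
      (hr.continuousAt (Icc_mem_nhds hx.1 hx.2))).exp
  -- `V E` increases at rate at least `b E`, since `(V E)' = (V' - r V) E`.
  have hgrowth : ∫ s in t₀..t, b s * E s ≤ V t * E t - V t₀ * E t₀ :=
    integral_le_sub_of_hasDeriv_right_of_le ht (hV.mul hE)
      (fun x hx => ((hV' x hx).mul (hE' x hx)).hasDerivWithinAt)
      ((intervalIntegrable_iff_integrableOn_Icc_of_le ht).1 (hb.mul_exp_integral hrint))
      fun x hx => by linear_combination mul_le_mul_of_nonneg_right (hsuper x hx) (exp_pos _).le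
  have hEt : E t = 1 := by simp [E]
  rw [hEt, mul_one] at hgrowth
  have := mul_le_mul_of_nonneg_right hu₀ (exp_pos (∫ h in t₀..t, r h)).le
  change u₀ * E t₀ + ∫ s in t₀..t, b s * E s ≤ V t
  linarith

end Duhamel

lemma hasDerivAt_one_add_mul_rpow {d e s : ℝ} (hs : 0 < 1 + s * d) :
    HasDerivAt (fun s => (1 + s * d) ^ e) (d * e * (1 + s * d) ^ (e - 1)) s := by
  have h : HasDerivAt (fun s => 1 + s * d) d s := by
    simpa using ((hasDerivAt_id s).mul_const d).const_add 1
  exact h.rpow_const (Or.inl hs.ne')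

lemma continuousOn_one_add_mul_rpow {d : ℝ} (hd : 0 ≤ d) (e : ℝ) :
    ContinuousOn (fun s => (1 + s * d) ^ e) (Ici 0) := fun s hs =>
  (hasDerivAt_one_add_mul_rpow (by nlinarith [mem_Ici.1 hs])).continuousAt.continuousWithinAt

lemma tendsto_one_add_mul_rpow_atTop {d e : ℝ} (hd : 0 < d) (he : e < 0) :
    Tendsto (fun s => (1 + s * d) ^ e) atTop (𝓝 0) := by
  have h : Tendsto (fun s => 1 + s * d) atTop atTop :=
    tendsto_atTop_add_const_left _ _ (tendsto_id.atTop_mul_const hd)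
  simpa [Function.comp_def] using (tendsto_rpow_neg_atTop (neg_pos.2 he)).comp h

lemma one_add_mul_rpow_le {d t e : ℝ} (hd : 0 < d) (ht : 0 ≤ t) (he : e ≤ 0) :
    (1 + t * d) ^ e ≤ min 1 d ^ e * (1 + t) ^ e := by
  have hm : 0 < min 1 d := lt_min one_pos hd
  rw [← mul_rpow hm.le (by linarith)]
  exact rpow_le_rpow_of_nonpos (by positivity)
    (by nlinarith [min_le_left 1 d, min_le_right 1 d]) he

lemma supersolution_ineq_rpow {A B₀ d δ₁ δ₂ K x : ℝ} (hx : 0 < x) (hd : 0 ≤ d)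
    (hK₀ : 0 ≤ K) (hK : 2 * B₀ ≤ K * A)
    (hsmall : B₀ * x ^ (δ₁ - δ₂) + (δ₂ - δ₁) * x ^ (δ₁ - 1) ≤ A / 2) :
    (-(A * d * x ^ (-δ₁)) + B₀ * d * x ^ (-δ₂)) * (K * x ^ (δ₁ - δ₂)) + B₀ * d * x ^ (-δ₂) ≤
      K * (d * (δ₁ - δ₂) * x ^ (δ₁ - δ₂ - 1)) := by
  have h₂ : x ^ (-δ₂) = x ^ (-δ₁) * x ^ (δ₁ - δ₂) := by
    rw [← rpow_add hx]; ring_nf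
  have h₃ : x ^ (δ₁ - δ₂ - 1) = x ^ (-δ₁) * x ^ (δ₁ - δ₂) * x ^ (δ₁ - 1) := by
    rw [← rpow_add hx, ← rpow_add hx]; ring_nf
  have hmargin : B₀ ≤ K * (A - B₀ * x ^ (δ₁ - δ₂) - (δ₂ - δ₁) * x ^ (δ₁ - 1)) := by
    nlinarith [mul_le_mul_of_nonneg_left hsmall hK₀]
  rw [h₂, h₃]
  linear_combination mul_le_mul_of_nonneg_left hmargin
    (by positivity : 0 ≤ d * x ^ (-δ₁) * x ^ (δ₁ - δ₂))

lemma eventually_rpow_margin {A B₀ d δ₁ δ₂ : ℝ} (hA : 0 < A) (hd : 0 < d) (hδ₁₂ : δ₁ < δ₂)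
    (hδ₁ : δ₁ < 1) :
    ∀ᶠ s in atTop, B₀ * (1 + s * d) ^ (δ₁ - δ₂) + (δ₂ - δ₁) * (1 + s * d) ^ (δ₁ - 1) ≤ A / 2 := by
  have h := ((tendsto_one_add_mul_rpow_atTop hd (sub_neg.2 hδ₁₂)).const_mul B₀).add
    ((tendsto_one_add_mul_rpow_atTop hd (sub_neg.2 hδ₁)).const_mul (δ₂ - δ₁))
  rw [mul_zero, mul_zero, add_zero] at h
  exact (h.eventually_lt_const (half_pos hA)).mono fun _ => le_of_lt

theorem exists_duhamel_le_rpow {A B₀ d δ₁ δ₂ : ℝ} (u₀ : ℝ) (hA : 0 < A) (hB₀ : 0 < B₀)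
    (hd : 0 < d) (hδ₁₂ : δ₁ < δ₂) (hδ₁ : δ₁ < 1) :
    ∃ K > 0, ∃ s₀ ≥ 0, ∀ t ≥ s₀,
      duhamel (fun s => -(A * d * (1 + s * d) ^ (-δ₁)) + B₀ * d * (1 + s * d) ^ (-δ₂))
        (fun s => B₀ * d * (1 + s * d) ^ (-δ₂)) u₀ 0 t ≤ K * (1 + t * d) ^ (δ₁ - δ₂) := by
  set r : ℝ → ℝ := fun s => -(A * d * (1 + s * d) ^ (-δ₁)) + B₀ * d * (1 + s * d) ^ (-δ₂)
  set b : ℝ → ℝ := fun s => B₀ * d * (1 + s * d) ^ (-δ₂)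
  have hb : ContinuousOn b (Ici 0) :=
    continuousOn_const.mul (continuousOn_one_add_mul_rpow hd.le _)
  have hr : ContinuousOn r (Ici 0) :=
    (continuousOn_const.mul (continuousOn_one_add_mul_rpow hd.le _)).neg.add hb
  obtain ⟨s₁, hs₁⟩ := eventually_atTop.1 (eventually_rpow_margin (B₀ := B₀) hA hd hδ₁₂ hδ₁)
  set s₀ := max s₁ 0
  have hs₀ : 0 ≤ s₀ := le_max_right _ _
  set K := max (2 * B₀ / A) (duhamel r b u₀ 0 s₀ / (1 + s₀ * d) ^ (δ₁ - δ₂))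
  have hK : 2 * B₀ ≤ K * A := (div_le_iff₀ hA).1 (le_max_left _ _)
  have hK₀ : 0 < K := (by positivity : 0 < 2 * B₀ / A).trans_le (le_max_left _ _)
  refine ⟨K, hK₀, s₀, hs₀, fun t ht => ?_⟩
  have hI : ∀ {x y : ℝ}, 0 ≤ x → Icc x y ⊆ Ici 0 := fun hx _ hz => hx.trans hz.1
  rw [← duhamel_flow (t₁ := s₀) ((hr.mono (hI le_rfl)).intervalIntegrable_of_Icc hs₀)
    ((hr.mono (hI hs₀)).intervalIntegrable_of_Icc ht)
    ((hb.mono (hI le_rfl)).intervalIntegrable_of_Icc hs₀)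
    ((hb.mono (hI hs₀)).intervalIntegrable_of_Icc ht)]
  have hpos : ∀ x ∈ Ioo s₀ t, 0 < 1 + x * d := fun x hx => by
    have := hs₀.trans hx.1.le; positivity
  refine duhamel_le_of_supersolution (V := fun s => K * (1 + s * d) ^ (δ₁ - δ₂)) ht
    (hr.mono (hI hs₀)) ((hb.mono (hI hs₀)).intervalIntegrable_of_Icc ht)
    (continuousOn_const.mul ((continuousOn_one_add_mul_rpow hd.le _).mono (hI hs₀)))
    (fun x hx => (hasDerivAt_one_add_mul_rpow (hpos x hx)).const_mul K)
    (fun x hx => supersolution_ineq_rpow (hpos x hx) hd.le hK₀.le hK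
      (hs₁ x ((le_max_left _ _).trans hx.1.le)))
    ((div_le_iff₀ (by positivity)).1 (le_max_right _ _))

theorem gronwall_bound_general_general
    (δ1 δ2 A B0 d u0 : ℝ)
    (hδ12 : δ1 < δ2) (hδ2 : δ2 < 1)
    (hA : 0 < A) (hB0 : 0 < B0) (hd : 0 < d) (hu0 : 0 ≤ u0)
    (Bf : ℝ → ℝ)
    (hB_nonneg : ∀ t ≥ (0:ℝ), 0 ≤ Bf t)
    (hB_loc : LocallyIntegrableOn Bf (Set.Ici (0:ℝ)) volume)
    (hB_le : ∀ t ≥ (0:ℝ), Bf t ≤ B0 * d * (1 + t * d) ^ (-δ2)) :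
    ∃ (Γ T0 : ℝ), 0 < Γ ∧ 0 ≤ T0 ∧ ∀ t ≥ T0,
      u0 * Real.exp (∫ s in (0:ℝ)..t, (-(A * d * (1 + s * d) ^ (-δ1)) + Bf s)) +
        (∫ s in (0:ℝ)..t,
          Bf s * Real.exp (∫ h in s..t, (-(A * d * (1 + h * d) ^ (-δ1)) + Bf h))) ≤
      Γ * (1 + t) ^ (δ1 - δ2) := by
  obtain ⟨K, hK, s₀, hs₀, hbound⟩ := exists_duhamel_le_rpow u0 hA hB0 hd hδ12 (hδ12.trans hδ2)
  refine ⟨K * min 1 d ^ (δ1 - δ2), s₀, by positivity, hs₀, fun t ht => ?_⟩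
  have ht₀ : 0 ≤ t := hs₀.trans ht
  have hint : ∀ c e : ℝ, IntervalIntegrable (fun s => c * d * (1 + s * d) ^ e) volume 0 t :=
    fun c e => (continuousOn_const.mul ((continuousOn_one_add_mul_rpow hd.le e).mono
      Icc_subset_Ici_self)).intervalIntegrable_of_Icc ht₀
  have hBf : IntervalIntegrable Bf volume 0 t :=
    (intervalIntegrable_iff_integrableOn_Icc_of_le ht₀).2
      (hB_loc.integrableOn_compact_subset Icc_subset_Ici_self isCompact_Icc)
  calc _ = duhamel (fun s => -(A * d * (1 + s * d) ^ (-δ1)) + Bf s) Bf u0 0 t := rfl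
    _ ≤ duhamel (fun s => -(A * d * (1 + s * d) ^ (-δ1)) + B0 * d * (1 + s * d) ^ (-δ2))
          (fun s => B0 * d * (1 + s * d) ^ (-δ2)) u0 0 t :=
      duhamel_mono ht₀ hu0 ((hint A _).neg.add hBf) ((hint A _).neg.add (hint B0 _)) hBf
        (hint B0 _) (fun s hs => add_le_add_right (hB_le s hs.1) _)
        (fun s hs => hB_nonneg s hs.1) (fun s hs => hB_le s hs.1)
    _ ≤ K * (1 + t * d) ^ (δ1 - δ2) := hbound t ht
    _ ≤ K * min 1 d ^ (δ1 - δ2) * (1 + t) ^ (δ1 - δ2) := by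
      rw [mul_assoc]
      exact mul_le_mul_of_nonneg_left (one_add_mul_rpow_le hd ht₀ (by linarith)) hK.le

/-- Integrated Grönwall bound: if `A_t = A d (1+td)^{-δ₁}` and `B` is a nonnegative locally
integrable function with `B_t ≤ B₀ d (1+td)^{-δ₂}` on `[0,∞)`, where `0 < δ₁ < δ₂ < 1`,
then the quantity `u₀ e^{∫₀ᵗ (-A_s + B_s) ds} + ∫₀ᵗ B_s e^{∫_sᵗ (-A_h + B_h) dh} ds` is
eventually bounded by `Γ (1+t)^{δ₁ - δ₂}`. -/
theorem gronwall_bound_general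
    (δ1 δ2 A B0 d u0 : ℝ)
    (hδ1 : 0 < δ1) (hδ12 : δ1 < δ2) (hδ2 : δ2 < 1)
    (hA : 0 < A) (hB0 : 0 < B0) (hd : 0 < d) (hu0 : 0 ≤ u0)
    (Bf : ℝ → ℝ)
    (hB_nonneg : ∀ t ≥ (0:ℝ), 0 ≤ Bf t)
    (hB_loc : LocallyIntegrableOn Bf (Set.Ici (0:ℝ)) volume)
    (hB_le : ∀ t ≥ (0:ℝ), Bf t ≤ B0 * d * (1 + t * d) ^ (-δ2)) :
    ∃ (Γ T0 : ℝ), 0 < Γ ∧ 0 ≤ T0 ∧ ∀ t ≥ T0,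
      u0 * Real.exp (∫ s in (0:ℝ)..t, (-(A * d * (1 + s * d) ^ (-δ1)) + Bf s)) +
        (∫ s in (0:ℝ)..t,
          Bf s * Real.exp (∫ h in s..t, (-(A * d * (1 + h * d) ^ (-δ1)) + Bf h))) ≤
      Γ * (1 + t) ^ (δ1 - δ2) :=
  gronwall_bound_general_general δ1 δ2 A B0 d u0 hδ12 hδ2 hA hB0 hd hu0 Bf hB_nonneg hB_loc hB_le
end

section
/- Let A > 0, B > 0, δ ∈ (0,1) and u0 ≥ 0, and set B_t = B (1+t)^{−δ}. Then there exist Γ > 0 and T0 ≥ 0 such that for all t ≥ T0, u0 · exp(∫_0^t (−A + B_s) ds) + ∫_0^t B_s · exp(∫_s^t (−A + B_h) dh) ds ≤ Γ (1+t)^{−δ}. -/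
open MeasureTheory intervalIntegral

/-!
Since `B_h → 0`, the exponent obeys `∫_s^t (-A + B_h) dh ≤ K - A (t - s) / 2` for one constant `K`
and all `0 ≤ s ≤ t`. As `1 + t ≤ (1 + s) (1 + (t - s))`, we have
`B_s ≤ B (1 + t)^{-δ} (1 + (t - s))^δ`, so the integral term is at most
`B e^K (1 + t)^{-δ} ∫_0^∞ (1 + u)^δ e^{-A u / 2} du`, while the first term decays exponentially.
In particular `T0 = 0` works.
-/

open Filter Real Set Topology

lemma intervalIntegrable_of_continuousOn_Ici {E : Type*} [NormedAddCommGroup E] {f : ℝ → E}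
    {a b c : ℝ} (hf : ContinuousOn f (Ici c)) (ha : c ≤ a) (hb : c ≤ b) :
    IntervalIntegrable f volume a b :=
  (hf.mono fun _ hx => (le_min ha hb).trans hx.1).intervalIntegrable

lemma exists_integral_le_const_add_mul_of_tendsto_zero {b : ℝ → ℝ} (hb : ContinuousOn b (Ici 0))
    (hlim : Tendsto b atTop (𝓝 0)) {c : ℝ} (hc : 0 < c) :
    ∃ K, ∀ s t, 0 ≤ s → s ≤ t → ∫ h in s..t, b h ≤ K + c * (t - s) := by
  obtain ⟨T, hT⟩ := eventually_atTop.mp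
    ((hlim.eventually (eventually_le_nhds hc)).and (eventually_ge_atTop 0))
  have hT0 : 0 ≤ T := (hT T le_rfl).2
  set K := ∫ h in (0)..T, |b h|
  have early : ∀ s t, 0 ≤ s → s ≤ t → t ≤ T → ∫ h in s..t, b h ≤ K := fun s t hs hst htT =>
    calc ∫ h in s..t, b h ≤ ∫ h in s..t, |b h| :=
          integral_mono_on hst (intervalIntegrable_of_continuousOn_Ici hb hs (hs.trans hst))
            (intervalIntegrable_of_continuousOn_Ici hb.abs hs (hs.trans hst))
            fun h _ => le_abs_self (b h)
      _ ≤ K := integral_mono_interval hs hst htT (.of_forall fun h => abs_nonneg (b h))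
            (intervalIntegrable_of_continuousOn_Ici hb.abs le_rfl hT0)
  have late : ∀ s t, T ≤ s → s ≤ t → ∫ h in s..t, b h ≤ c * (t - s) := fun s t hTs hst => by
    simpa [mul_comm] using integral_mono_on hst
      (intervalIntegrable_of_continuousOn_Ici hb (hT0.trans hTs) (hT0.trans (hTs.trans hst)))
      intervalIntegrable_const fun h hh => (hT h (hTs.trans hh.1)).1
  have hK : 0 ≤ K := integral_nonneg hT0 fun h _ => abs_nonneg (b h)
  refine ⟨K, fun s t hs hst => ?_⟩
  rcases le_total t T with htT | hTt
  · linarith [early s t hs hst htT, mul_nonneg hc.le (sub_nonneg.2 hst)]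
  rcases le_total T s with hTs | hsT
  · linarith [late s t hTs hst]
  rw [← integral_add_adjacent_intervals
    (intervalIntegrable_of_continuousOn_Ici hb hs hT0)
    (intervalIntegrable_of_continuousOn_Ici hb hT0 (hT0.trans hTt))]
  nlinarith [early s T hs hsT le_rfl, late T t le_rfl hTt]

lemma one_add_rpow_neg_le {δ s t : ℝ} (hδ : 0 ≤ δ) (hs : 0 ≤ s) (hst : s ≤ t) :
    (1 + s) ^ (-δ) ≤ (1 + t) ^ (-δ) * (1 + (t - s)) ^ δ := by
  have hprod : (1 + t) ≤ (1 + s) * (1 + (t - s)) := by nlinarith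
  have h1 : ((1 + s) * (1 + (t - s))) ^ (-δ) ≤ (1 + t) ^ (-δ) :=
    rpow_le_rpow_of_nonpos (by linarith) hprod (by linarith)
  rw [mul_rpow (by linarith) (by linarith)] at h1
  have h2 : (1 + (t - s)) ^ (-δ) * (1 + (t - s)) ^ δ = 1 := by
    rw [← rpow_add (by linarith)]; simp
  calc (1 + s) ^ (-δ) = (1 + s) ^ (-δ) * (1 + (t - s)) ^ (-δ) * (1 + (t - s)) ^ δ := by
        rw [mul_assoc, h2, mul_one]
    _ ≤ (1 + t) ^ (-δ) * (1 + (t - s)) ^ δ :=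
        mul_le_mul_of_nonneg_right h1 (rpow_nonneg (by linarith) _)

lemma one_add_rpow_mul_exp_le {δ c u : ℝ} (hδ : δ ∈ Icc (0 : ℝ) 1) (hc : 0 < c) (hu : 0 ≤ u) :
    (1 + u) ^ δ * exp (-(2 * c * u)) ≤ exp c / c * exp (-(c * u)) := by
  have hpow : (1 + u) ^ δ ≤ 1 + u := by
    simpa using rpow_le_rpow_of_exponent_le (by linarith : (1 : ℝ) ≤ 1 + u) hδ.2
  have hlin : 1 + u ≤ exp c / c * exp (c * u) := by
    rw [div_mul_eq_mul_div, ← exp_add, le_div_iff₀ hc]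
    nlinarith [add_one_le_exp (c + c * u)]
  calc (1 + u) ^ δ * exp (-(2 * c * u)) ≤ exp c / c * exp (c * u) * exp (-(2 * c * u)) :=
        mul_le_mul_of_nonneg_right (hpow.trans hlin) (exp_nonneg _)
    _ = exp c / c * exp (-(c * u)) := by rw [mul_assoc, ← exp_add]; ring_nf

lemma integral_exp_neg_mul_sub_le {c : ℝ} (hc : 0 < c) (t : ℝ) :
    ∫ s in (0)..t, exp (-(c * (t - s))) ≤ 1 / c := by
  rw [integral_comp_sub_left (fun x => exp (-(c * x))), sub_self, sub_zero]
  have := integral_comp_mul_left (a := 0) (b := t) (fun x => exp (-x)) hc.ne'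
  simp only [mul_zero, smul_eq_mul, integral_comp_neg, neg_zero, integral_exp, exp_zero] at this
  rw [this, one_div]
  exact mul_le_of_le_one_right (inv_nonneg.2 hc.le) (by linarith [exp_pos (-(c * t))])

lemma continuousOn_mul_one_add_rpow (B δ : ℝ) :
    ContinuousOn (fun h : ℝ => B * (1 + h) ^ (-δ)) (Ici 0) :=
  continuousOn_const.mul <| (continuous_const_add 1).continuousOn.rpow_const
    fun h (hh : 0 ≤ h) => Or.inl (by positivity)

lemma exists_integral_drift_le (B : ℝ) {A δ : ℝ} (hA : 0 < A) (hδ : 0 < δ) :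
    ∃ K, ∀ s t, 0 ≤ s → s ≤ t →
      ∫ h in s..t, (-A + B * (1 + h) ^ (-δ)) ≤ K - A / 2 * (t - s) := by
  have hlim : Tendsto (fun h : ℝ => B * (1 + h) ^ (-δ)) atTop (𝓝 0) := by
    simpa using ((tendsto_rpow_neg_atTop hδ).comp
      (tendsto_atTop_add_const_left atTop 1 tendsto_id)).const_mul B
  obtain ⟨K, hK⟩ := exists_integral_le_const_add_mul_of_tendsto_zero
    (continuousOn_mul_one_add_rpow B δ) hlim (half_pos hA)
  refine ⟨K, fun s t hs hst => ?_⟩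
  rw [integral_add intervalIntegrable_const
    (intervalIntegrable_of_continuousOn_Ici (continuousOn_mul_one_add_rpow B δ) hs
      (hs.trans hst)), intervalIntegral.integral_const, smul_eq_mul]
  linarith [hK s t hs hst]

section ExponentialContraction

variable {B K c δ t : ℝ}

lemma mul_exp_le_of_le_sub_mul (u0 : ℝ) (hu0 : 0 ≤ u0) (hδ : δ ∈ Icc (0 : ℝ) 1) (hc : 0 < c)
    (ht : 0 ≤ t) {x : ℝ} (hx : x ≤ K - 2 * c * t) :
    u0 * exp x ≤ u0 * exp K * (exp c / c) * (1 + t) ^ (-δ) := by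
  have hdecay : (1 + t) ^ δ * exp (-(2 * c * t)) ≤ exp c / c :=
    (one_add_rpow_mul_exp_le hδ hc ht).trans
      (mul_le_of_le_one_right (by positivity) (exp_le_one_iff.2 (by nlinarith)))
  have hsplit : exp (-(2 * c * t)) = (1 + t) ^ (-δ) * ((1 + t) ^ δ * exp (-(2 * c * t))) := by
    rw [← mul_assoc, ← rpow_add (by linarith), neg_add_cancel, rpow_zero, one_mul]
  calc u0 * exp x ≤ u0 * (exp K * exp (-(2 * c * t))) := by
        rw [← exp_add]; gcongr; linarith
    _ ≤ u0 * (exp K * ((1 + t) ^ (-δ) * (exp c / c))) := by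
        rw [hsplit]; gcongr
    _ = u0 * exp K * (exp c / c) * (1 + t) ^ (-δ) := by ring

lemma integral_mul_exp_integral_le {F : ℝ → ℝ} (hF : ContinuousOn F (Ici 0)) (hB : 0 ≤ B)
    (hδ : δ ∈ Icc (0 : ℝ) 1) (hc : 0 < c) (ht : 0 ≤ t)
    (hK : ∀ s, 0 ≤ s → s ≤ t → ∫ h in s..t, F h ≤ K - 2 * c * (t - s)) :
    ∫ s in (0)..t, B * (1 + s) ^ (-δ) * exp (∫ h in s..t, F h) ≤
      B * exp K * (exp c / c) * (1 / c) * (1 + t) ^ (-δ) := by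
  have hIcc : uIcc 0 t ⊆ Ici 0 := fun h hh => (le_min le_rfl ht).trans hh.1
  have hint :
      IntervalIntegrable (fun s => B * (1 + s) ^ (-δ) * exp (∫ h in s..t, F h)) volume 0 t :=
    ContinuousOn.intervalIntegrable <| ((continuousOn_mul_one_add_rpow B δ).mono hIcc).mul
      (continuousOn_primitive_interval_left (hF.mono hIcc).integrableOn_uIcc).rexp
  have hpt : ∀ s ∈ Icc 0 t, B * (1 + s) ^ (-δ) * exp (∫ h in s..t, F h) ≤
      B * exp K * (exp c / c) * (1 + t) ^ (-δ) * exp (-(c * (t - s))) := by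
    rintro s ⟨hs, hst⟩
    have hexp : exp (∫ h in s..t, F h) ≤ exp K * exp (-(2 * c * (t - s))) := by
      rw [← exp_add]; exact exp_le_exp.2 (by linarith [hK s hs hst])
    calc B * (1 + s) ^ (-δ) * exp (∫ h in s..t, F h)
        ≤ B * ((1 + t) ^ (-δ) * (1 + (t - s)) ^ δ) * (exp K * exp (-(2 * c * (t - s)))) :=
          mul_le_mul (mul_le_mul_of_nonneg_left (one_add_rpow_neg_le hδ.1 hs hst) hB) hexp
            (exp_nonneg _) (mul_nonneg hB (mul_nonneg (rpow_nonneg (by linarith) _)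
              (rpow_nonneg (by linarith) _)))
      _ = B * exp K * (1 + t) ^ (-δ) * ((1 + (t - s)) ^ δ * exp (-(2 * c * (t - s)))) := by
          ring
      _ ≤ B * exp K * (1 + t) ^ (-δ) * (exp c / c * exp (-(c * (t - s)))) :=
          mul_le_mul_of_nonneg_left (one_add_rpow_mul_exp_le hδ hc (by linarith))
            (mul_nonneg (by positivity) (rpow_nonneg (by linarith) _))
      _ = _ := by ring
  calc ∫ s in (0)..t, B * (1 + s) ^ (-δ) * exp (∫ h in s..t, F h)
      ≤ ∫ s in (0)..t, B * exp K * (exp c / c) * (1 + t) ^ (-δ) * exp (-(c * (t - s))) :=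
        integral_mono_on ht hint (by apply Continuous.intervalIntegrable; fun_prop) hpt
    _ = B * exp K * (exp c / c) * (1 + t) ^ (-δ) * ∫ s in (0)..t, exp (-(c * (t - s))) :=
        integral_const_mul _ _
    _ ≤ B * exp K * (exp c / c) * (1 + t) ^ (-δ) * (1 / c) :=
        mul_le_mul_of_nonneg_left (integral_exp_neg_mul_sub_le hc t)
          (mul_nonneg (by positivity) (rpow_nonneg (by linarith) _))
    _ = _ := by ring

end ExponentialContraction

/-- Integrated Grönwall bound in the case `m* = 0`: with a constant drift `A > 0` and
perturbation `B_t = B (1+t)^{-δ}` with `δ ∈ (0,1)`, the quantity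
`u₀ e^{∫₀ᵗ (-A + B_s) ds} + ∫₀ᵗ B_s e^{∫_sᵗ (-A + B_h) dh} ds` is eventually bounded
by `Γ (1+t)^{-δ}`. -/
theorem gronwall_bound_constant_gap
    (A B δ u0 : ℝ) (hA : 0 < A) (hB : 0 < B) (hδ : δ ∈ Set.Ioo (0:ℝ) 1) (hu0 : 0 ≤ u0) :
    ∃ (Γ T0 : ℝ), 0 < Γ ∧ 0 ≤ T0 ∧ ∀ t ≥ T0,
      u0 * Real.exp (∫ s in (0:ℝ)..t, (-A + B * (1 + s) ^ (-δ))) +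
        (∫ s in (0:ℝ)..t,
          (B * (1 + s) ^ (-δ)) * Real.exp (∫ h in s..t, (-A + B * (1 + h) ^ (-δ)))) ≤
      Γ * (1 + t) ^ (-δ) := by
  obtain ⟨K, hK⟩ := exists_integral_drift_le B hA hδ.1
  have hc : 0 < A / 4 := by positivity
  have hK' : ∀ s t, 0 ≤ s → s ≤ t →
      ∫ h in s..t, (-A + B * (1 + h) ^ (-δ)) ≤ K - 2 * (A / 4) * (t - s) :=
    fun s t hs hst => (hK s t hs hst).trans_eq (by ring)
  refine ⟨(u0 + B * (1 / (A / 4))) * (exp K * (exp (A / 4) / (A / 4))), 0,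
    mul_pos (add_pos_of_nonneg_of_pos hu0 (by positivity)) (by positivity), le_rfl,
    fun t ht => ?_⟩
  have hδ' : δ ∈ Icc (0 : ℝ) 1 := Ioo_subset_Icc_self hδ
  have h1 := mul_exp_le_of_le_sub_mul u0 hu0 hδ' hc ht (by simpa using hK' 0 t le_rfl ht)
  have h2 := integral_mul_exp_integral_le (F := fun h => -A + B * (1 + h) ^ (-δ))
    (continuousOn_const.add (continuousOn_mul_one_add_rpow B δ)) hB.le hδ' hc ht
    fun s hs hst => hK' s t hs hst
  linarith
end
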